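/- If 1/2 < α < 1 and p = |f''(0)|/(2(1-α)) ≤ (3α-1)/(5α-1) for a convex mapping f of order α, then 2(1-α)·(1 + α·(1+p)/(1-p)) ≤ 8α(1-α), and hence (1-|z|²)²|Sf(z)| ≤ 8α(1-α) for all z in the unit disk. -/

import Mathlib

/-!
With `P = f''/f'`, the hypothesis `α < Re (1 + z P)` says that `z P / (z P + 2(1 - α))` maps the
disc into itself. By the Schwarz lemma it equals `z u(z)` with `|u| ≤ 1`, that is
`P = 2(1 - α) u / (1 - z u)`. Differentiating, `Sf = P' - P²/2 = 2(1 - α)(u' + α u²)/(1 - z u)²`,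
and the Schwarz–Pick bound `|u'| (1 - |z|²) ≤ 1 - |u|²` reduces `(1 - |z|²)² |Sf| ≤ 8α(1 - α)` to an
inequality between the real numbers `|z|` and `|u(z)|`, which holds for every `α ≥ 1/2`.
The first inequality is a rearrangement of `p (5α - 1) ≤ 3α - 1`.
-/

open Metric Set Filter Topology ComplexConjugate

theorem one_add_mul_div_one_sub_le {α p : ℝ} (hα : 1 / 5 < α)
    (hp : p ≤ (3 * α - 1) / (5 * α - 1)) :
    1 + α * ((1 + p) / (1 - p)) ≤ 4 * α := by
  rw [le_div_iff₀ (by linarith)] at hp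
  have hp1 : 0 < 1 - p := by nlinarith
  rw [mul_div_assoc', ← le_sub_iff_add_le', div_le_iff₀ hp1]
  nlinarith

theorem one_sub_sq_mul_one_sub_sq_add_le {α t v : ℝ} (hα : 1 / 2 ≤ α) (ht0 : 0 ≤ t)
    (ht1 : t ≤ 1) (hv0 : 0 ≤ v) (hv1 : v ≤ 1) :
    (1 - t ^ 2) * (1 - v ^ 2) + α * v ^ 2 * (1 - t ^ 2) ^ 2 ≤ 4 * α * (1 - t * v) ^ 2 := by
  have ht2 : 0 ≤ 1 - t ^ 2 := by nlinarith
  -- at `α = 1/2` this is a quadratic in `v` of discriminant `-8 (1 - t²)³`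
  have half : 2 * (1 - t ^ 2) * (1 - v ^ 2) + v ^ 2 * (1 - t ^ 2) ^ 2 ≤ 4 * (1 - t * v) ^ 2 := by
    set A := 1 + 4 * t ^ 2 - t ^ 4
    have hA : 0 < A := by nlinarith
    have hid : A * (4 * (1 - t * v) ^ 2 - (2 * (1 - t ^ 2) * (1 - v ^ 2) + v ^ 2 * (1 - t ^ 2) ^ 2))
        = (A * v - 4 * t) ^ 2 + 2 * (1 - t ^ 2) ^ 3 := by ring
    nlinarith [sq_nonneg (A * v - 4 * t), pow_nonneg ht2 3]
  -- and the difference of the two sides increases with `α`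
  have slope : v * (1 - t ^ 2) ≤ 2 * (1 - t * v) := by
    nlinarith [mul_nonneg hv0 (sq_nonneg (1 - t))]
  have slope_sq : v ^ 2 * (1 - t ^ 2) ^ 2 ≤ 4 * (1 - t * v) ^ 2 := by
    nlinarith [mul_nonneg hv0 ht2]
  nlinarith

theorem one_sub_mul_ne_zero_of_norm_lt_one {R : Type*} [NormedRing R] [NormOneClass R]
    {a b : R} (ha : ‖a‖ < 1) (hb : ‖b‖ ≤ 1) : 1 - a * b ≠ 0 := by
  have hlt : ‖a * b‖ < 1 :=
    (norm_mul_le a b).trans_lt (mul_lt_one_of_nonneg_of_lt_one_left (norm_nonneg a) ha hb)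
  intro h
  rw [← sub_eq_zero.1 h, norm_one] at hlt
  exact hlt.false

theorem one_sub_sq_sq_mul_norm_div_le {α : ℝ} (hα : 1 / 2 ≤ α) {z u d : ℂ} (hz : ‖z‖ < 1)
    (hu : ‖u‖ ≤ 1) (hd : ‖d‖ * (1 - ‖z‖ ^ 2) ≤ 1 - ‖u‖ ^ 2) :
    (1 - ‖z‖ ^ 2) ^ 2 * ‖(d + α * u ^ 2) / (1 - z * u) ^ 2‖ ≤ 4 * α := by
  have htv : 0 < 1 - ‖z‖ * ‖u‖ := by nlinarith [norm_nonneg z, norm_nonneg u]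
  have hden : 1 - ‖z‖ * ‖u‖ ≤ ‖1 - z * u‖ := by
    simpa [norm_mul] using norm_sub_norm_le (1 : ℂ) (z * u)
  have hnum : ‖d + α * u ^ 2‖ ≤ ‖d‖ + α * ‖u‖ ^ 2 := by
    refine (norm_add_le _ _).trans_eq ?_
    rw [norm_mul, norm_pow, Complex.norm_real, Real.norm_of_nonneg (by linarith)]
  have hz2 : 0 ≤ 1 - ‖z‖ ^ 2 := by nlinarith [norm_nonneg z]
  rw [norm_div, norm_pow, mul_div_assoc', div_le_iff₀ (pow_pos (htv.trans_le hden) 2)]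
  calc (1 - ‖z‖ ^ 2) ^ 2 * ‖d + α * u ^ 2‖
      ≤ (1 - ‖z‖ ^ 2) * (‖d‖ * (1 - ‖z‖ ^ 2)) + α * ‖u‖ ^ 2 * (1 - ‖z‖ ^ 2) ^ 2 := by
        nlinarith [mul_le_mul_of_nonneg_left hnum (pow_nonneg hz2 2)]
    _ ≤ (1 - ‖z‖ ^ 2) * (1 - ‖u‖ ^ 2) + α * ‖u‖ ^ 2 * (1 - ‖z‖ ^ 2) ^ 2 := by gcongr
    _ ≤ 4 * α * (1 - ‖z‖ * ‖u‖) ^ 2 :=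
        one_sub_sq_mul_one_sub_sq_add_le hα (norm_nonneg z) hz.le (norm_nonneg u) hu
    _ ≤ 4 * α * ‖1 - z * u‖ ^ 2 := by gcongr

namespace Complex

noncomputable def mobius (a z : ℂ) : ℂ := (z - a) / (1 - conj a * z)

variable {a z : ℂ}

theorem normSq_one_sub_conj_mul_sub_normSq_sub (a z : ℂ) :
    normSq (1 - conj a * z) - normSq (z - a) = (1 - normSq a) * (1 - normSq z) := by
  simp only [normSq_apply, mul_re, mul_im, sub_re, sub_im, one_re, one_im, conj_re, conj_im]
  ring

theorem norm_mobius_lt_one (ha : ‖a‖ < 1) (hz : ‖z‖ < 1) : ‖mobius a z‖ < 1 := by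
  have hden := one_sub_mul_ne_zero_of_norm_lt_one ((norm_conj a).trans_lt ha) hz.le
  rw [mobius, norm_div, div_lt_one (norm_pos_iff.2 hden)]
  refine lt_of_pow_lt_pow_left₀ 2 (norm_nonneg _) ?_
  have hprod : 0 < (1 - normSq a) * (1 - normSq z) := by
    rw [← Complex.sq_norm, ← Complex.sq_norm]
    exact mul_pos (by nlinarith [norm_nonneg a]) (by nlinarith [norm_nonneg z])
  rw [Complex.sq_norm, Complex.sq_norm]
  linarith [normSq_one_sub_conj_mul_sub_normSq_sub a z]

theorem mapsTo_mobius (ha : ‖a‖ < 1) : MapsTo (mobius a) (ball 0 1) (ball 0 1) := fun _ hz =>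
  mem_ball_zero_iff.2 (norm_mobius_lt_one ha (mem_ball_zero_iff.1 hz))

theorem hasDerivAt_mobius (ha : ‖a‖ < 1) (hz : ‖z‖ ≤ 1) :
    HasDerivAt (mobius a) ((1 - conj a * a) / (1 - conj a * z) ^ 2) z := by
  have hden := one_sub_mul_ne_zero_of_norm_lt_one ((norm_conj a).trans_lt ha) hz
  have h : HasDerivAt (fun w => (w - a) / (1 - conj a * w)) _ z :=
    ((hasDerivAt_id' z).sub_const a).div (((hasDerivAt_id' z).const_mul (conj a)).const_sub 1) hden
  exact h.congr_deriv (by ring)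

theorem differentiableOn_mobius (ha : ‖a‖ < 1) : DifferentiableOn ℂ (mobius a) (ball 0 1) :=
  fun _ hz => (hasDerivAt_mobius ha (mem_ball_zero_iff.1 hz).le).differentiableAt
    |>.differentiableWithinAt

@[simp] theorem mobius_self (a : ℂ) : mobius a a = 0 := by simp [mobius]

@[simp] theorem mobius_neg_zero (a : ℂ) : mobius (-a) 0 = a := by simp [mobius]

end Complex

open Complex

/-- The Schwarz–Pick lemma, infinitesimal form. -/
theorem norm_deriv_mul_le_of_mapsTo_ball {h : ℂ → ℂ} (hd : DifferentiableOn ℂ h (ball 0 1))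
    (hm : MapsTo h (ball 0 1) (ball 0 1)) {z : ℂ} (hz : z ∈ ball 0 1) :
    ‖deriv h z‖ * (1 - ‖z‖ ^ 2) ≤ 1 - ‖h z‖ ^ 2 := by
  have hb : ‖h z‖ < 1 := mem_ball_zero_iff.1 (hm hz)
  have hnz : ‖-z‖ < 1 := by rwa [norm_neg, ← mem_ball_zero_iff]
  set F := mobius (h z) ∘ h ∘ mobius (-z)
  have hFd : DifferentiableOn ℂ F (ball 0 1) :=
    ((differentiableOn_mobius hb).comp hd hm).comp (differentiableOn_mobius hnz) (mapsTo_mobius hnz)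
  have hFm : MapsTo F (ball 0 1) (closedBall (F 0) 1) := by
    rw [show F 0 = 0 from show mobius (h z) (h (mobius (-z) 0)) = 0 by simp]
    exact ((mapsTo_mobius hb).comp hm |>.comp (mapsTo_mobius hnz)).mono_right
      ball_subset_closedBall
  have hF' : HasDerivAt F (deriv h z * ((1 - ‖z‖ ^ 2 : ℝ) / (1 - ‖h z‖ ^ 2 : ℝ) : ℝ)) 0 := by
    have hφ := hasDerivAt_mobius (z := 0) hnz (by simp)
    have hh : HasDerivAt h (deriv h z) (mobius (-z) 0) := by
      rw [mobius_neg_zero]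
      exact (hd.differentiableAt (isOpen_ball.mem_nhds hz)).hasDerivAt
    have hψ : HasDerivAt (mobius (h z)) ((1 - conj (h z) * h z) / (1 - conj (h z) * h z) ^ 2)
        (h (mobius (-z) 0)) := by
      rw [mobius_neg_zero]
      exact hasDerivAt_mobius hb hb.le
    refine (hψ.comp 0 (hh.comp 0 hφ)).congr_deriv ?_
    have hb2 : (1 : ℂ) - (‖h z‖ ^ 2 : ℝ) ≠ 0 := by
      rw [← ofReal_one, ← ofReal_sub, ofReal_ne_zero]
      nlinarith [norm_nonneg (h z)]
    rw [conj_mul', conj_mul', norm_neg, mul_zero, sub_zero, one_pow, div_one]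
    push_cast at hb2 ⊢
    field_simp
  have hle := norm_deriv_le_one_of_mapsTo_ball hFd hFm one_pos
  have hb2 : 0 < 1 - ‖h z‖ ^ 2 := by nlinarith [norm_nonneg (h z)]
  have hz2 : 0 < 1 - ‖z‖ ^ 2 := by nlinarith [norm_nonneg z, mem_ball_zero_iff.1 hz]
  rwa [hF'.deriv, norm_mul, norm_real, Real.norm_of_nonneg (by positivity), mul_div_assoc',
    div_le_one hb2] at hle

theorem norm_deriv_mul_le_of_mapsTo_closedBall {h : ℂ → ℂ}
    (hd : DifferentiableOn ℂ h (ball 0 1)) (hm : MapsTo h (ball 0 1) (closedBall 0 1))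
    {z : ℂ} (hz : z ∈ ball 0 1) :
    ‖deriv h z‖ * (1 - ‖z‖ ^ 2) ≤ 1 - ‖h z‖ ^ 2 := by
  by_cases hball : MapsTo h (ball 0 1) (ball 0 1)
  · exact norm_deriv_mul_le_of_mapsTo_ball hd hball hz
  -- otherwise `‖h‖` attains its maximum `1` inside the disc, so `h` is constant
  obtain ⟨z₀, hz₀, hnorm⟩ : ∃ z₀ ∈ ball (0 : ℂ) 1, ‖h z₀‖ = 1 := by
    simp only [MapsTo, not_forall, mem_ball_zero_iff, not_lt] at hball
    obtain ⟨z₀, hz₀, h1⟩ := hball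
    exact ⟨z₀, mem_ball_zero_iff.2 hz₀,
      le_antisymm (mem_closedBall_zero_iff.1 (hm (mem_ball_zero_iff.2 hz₀))) h1⟩
  have hmax : IsMaxOn (norm ∘ h) (ball 0 1) z₀ := fun ζ hζ => by
    simpa [hnorm] using mem_closedBall_zero_iff.1 (hm hζ)
  have hconst := eqOn_of_isPreconnected_of_isMaxOn_norm
    (convex_ball (0 : ℂ) 1).isPreconnected isOpen_ball hd hz₀ hmax
  have hderiv : deriv h z = 0 := by
    rw [(hconst.eventuallyEq_of_mem (isOpen_ball.mem_nhds hz)).deriv_eq]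
    exact deriv_const z _
  simp [hderiv, hconst hz, hnorm]

theorem mapsTo_closedBall_of_mapsTo_mul_self {u : ℂ → ℂ} (hu : DifferentiableOn ℂ u (ball 0 1))
    (hm : MapsTo (fun ζ => ζ * u ζ) (ball 0 1) (ball 0 1)) :
    MapsTo u (ball 0 1) (closedBall 0 1) := by
  have hdslope : ∀ ζ, dslope (fun ζ => ζ * u ζ) 0 ζ = u ζ := by
    intro ζ
    rcases eq_or_ne ζ 0 with rfl | hζ
    · rw [dslope_same]
      have hu0 := (hu.differentiableAt (isOpen_ball.mem_nhds (mem_ball_self one_pos))).hasDerivAt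
      simpa using ((hasDerivAt_id' (0 : ℂ)).fun_mul hu0).deriv
    · simpa using dslope_sub_smul_of_ne u hζ
  intro ζ hζ
  have hw : DifferentiableOn ℂ (fun ζ => ζ * u ζ) (ball 0 1) := differentiableOn_id.fun_mul hu
  have := norm_dslope_le_div_of_mapsTo_ball hw
    (by simpa using hm.mono_right ball_subset_closedBall) hζ
  rw [hdslope, div_one] at this
  exact mem_closedBall_zero_iff.2 this

theorem norm_lt_norm_add_ofReal {x : ℂ} {c : ℝ} (hc : 0 < c) (hx : -(c / 2) < x.re) :
    ‖x‖ < ‖x + c‖ := by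
  refine lt_of_pow_lt_pow_left₀ 2 (norm_nonneg _) ?_
  rw [Complex.sq_norm, Complex.sq_norm, normSq_apply, normSq_apply]
  simp only [add_re, add_im, ofReal_re, ofReal_im, add_zero]
  nlinarith

theorem exists_eq_mul_div_one_sub_mul_of_lt_re {α : ℝ} (hα : α < 1) {P : ℂ → ℂ}
    (hP : DifferentiableOn ℂ P (ball 0 1)) (hre : ∀ ζ ∈ ball 0 1, α < (1 + ζ * P ζ).re) :
    ∃ u : ℂ → ℂ, DifferentiableOn ℂ u (ball 0 1) ∧ MapsTo u (ball 0 1) (closedBall 0 1) ∧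
      ∀ ζ ∈ ball 0 1, P ζ = (2 - 2 * α) * u ζ / (1 - ζ * u ζ) := by
  have hc : 0 < 2 - 2 * α := by linarith
  have hlt : ∀ ζ ∈ ball (0 : ℂ) 1, ‖ζ * P ζ‖ < ‖ζ * P ζ + (2 - 2 * α : ℝ)‖ := fun ζ hζ => by
    refine norm_lt_norm_add_ofReal hc ?_
    have := hre ζ hζ
    rw [add_re, one_re] at this
    linarith
  have hne : ∀ ζ ∈ ball (0 : ℂ) 1, ζ * P ζ + (2 - 2 * α : ℝ) ≠ 0 := fun ζ hζ =>
    norm_pos_iff.1 ((norm_nonneg _).trans_lt (hlt ζ hζ))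
  have hud : DifferentiableOn ℂ (fun ζ => P ζ / (ζ * P ζ + (2 - 2 * α : ℝ))) (ball 0 1) :=
    hP.div ((differentiableOn_id.fun_mul hP).add_const _) hne
  refine ⟨_, hud, mapsTo_closedBall_of_mapsTo_mul_self hud fun ζ hζ => ?_, fun ζ hζ => ?_⟩
  · beta_reduce
    rw [mem_ball_zero_iff, ← mul_div_assoc, norm_div,
      div_lt_one ((norm_nonneg _).trans_lt (hlt ζ hζ))]
    exact hlt ζ hζ
  · have hs := hne ζ hζ
    have hc' : ((2 - 2 * α : ℝ) : ℂ) ≠ 0 := ofReal_ne_zero.2 hc.ne'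
    rw [show (2 - 2 * α : ℂ) = (2 - 2 * α : ℝ) by push_cast; ring]
    generalize ((2 - 2 * α : ℝ) : ℂ) = c at hs hc' ⊢
    have h1 : 1 - ζ * (P ζ / (ζ * P ζ + c)) = c / (ζ * P ζ + c) := by
      field_simp
      ring
    rw [h1, eq_div_iff (div_ne_zero hc' hs)]
    field_simp

section Schwarzian

variable {𝕜 : Type*} [NontriviallyNormedField 𝕜]

noncomputable def preSchwarzian (f : 𝕜 → 𝕜) (z : 𝕜) : 𝕜 := deriv (deriv f) z / deriv f z

noncomputable def schwarzian (f : 𝕜 → 𝕜) (z : 𝕜) : 𝕜 :=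
  deriv (deriv (deriv f)) z / deriv f z - 3 / 2 * (deriv (deriv f) z / deriv f z) ^ 2

theorem schwarzian_eq_deriv_preSchwarzian [CharZero 𝕜] {f : 𝕜 → 𝕜} {z : 𝕜}
    (h₂ : DifferentiableAt 𝕜 (deriv (deriv f)) z) (h₁ : DifferentiableAt 𝕜 (deriv f) z)
    (h₀ : deriv f z ≠ 0) :
    schwarzian f z = deriv (preSchwarzian f) z - preSchwarzian f z ^ 2 / 2 := by
  have hP : HasDerivAt (preSchwarzian f) _ z := h₂.hasDerivAt.div h₁.hasDerivAt h₀
  rw [hP.deriv, schwarzian, preSchwarzian]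
  field_simp
  ring

theorem deriv_sub_sq_div_two_of_eventuallyEq {P u : 𝕜 → 𝕜} {α z : 𝕜}
    (hu : DifferentiableAt 𝕜 u z) (hz : 1 - z * u z ≠ 0)
    (hP : P =ᶠ[𝓝 z] fun ζ => (2 - 2 * α) * u ζ / (1 - ζ * u ζ)) :
    deriv P z - P z ^ 2 / 2 = (2 - 2 * α) * (deriv u z + α * u z ^ 2) / (1 - z * u z) ^ 2 := by
  have hQ : HasDerivAt (fun ζ => (2 - 2 * α) * u ζ / (1 - ζ * u ζ)) _ z :=
    (hu.hasDerivAt.const_mul (2 - 2 * α)).div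
      (((hasDerivAt_id' z).fun_mul hu.hasDerivAt).const_sub 1) hz
  rw [hP.deriv_eq, hQ.deriv, hP.eq_of_nhds]
  field_simp
  ring

end Schwarzian

theorem schwarzian_bound_improves_suita_large_alpha_general
    (f : ℂ → ℂ) (α : ℝ) (hα0 : 1 / 2 < α) (hα1 : α < 1)
    (hf : DifferentiableOn ℂ f (Metric.ball 0 1))
    (hf' : ∀ z ∈ Metric.ball (0:ℂ) 1, deriv f z ≠ 0)
    (hconv : ∀ z ∈ Metric.ball (0:ℂ) 1,
      α < (1 + z * (deriv (deriv f) z / deriv f z)).re)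
    (p : ℝ)
    (hpb : p ≤ (3 * α - 1) / (5 * α - 1)) :
    2 * (1 - α) * (1 + α * ((1 + p) / (1 - p))) ≤ 8 * α * (1 - α) ∧
    ∀ z ∈ Metric.ball (0:ℂ) 1,
      (1 - ‖z‖ ^ 2) ^ 2 *
        ‖deriv (deriv (deriv f)) z / deriv f z
          - 3 / 2 * (deriv (deriv f) z / deriv f z) ^ 2‖ ≤ 8 * α * (1 - α) := by
  refine ⟨?_, fun z hz => ?_⟩
  · nlinarith [one_add_mul_div_one_sub_le (by linarith) hpb]
  have hfa : AnalyticOnNhd ℂ f (ball 0 1) := hf.analyticOnNhd isOpen_ball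
  have hP : DifferentiableOn ℂ (preSchwarzian f) (ball 0 1) :=
    hfa.deriv.deriv.differentiableOn.div hfa.deriv.differentiableOn hf'
  obtain ⟨u, hud, hu, hPu⟩ := exists_eq_mul_div_one_sub_mul_of_lt_re hα1 hP hconv
  have hz1 : ‖z‖ < 1 := mem_ball_zero_iff.1 hz
  have huz : ‖u z‖ ≤ 1 := mem_closedBall_zero_iff.1 (hu hz)
  have hS : schwarzian f z = (2 - 2 * α) * (deriv u z + α * u z ^ 2) / (1 - z * u z) ^ 2 := by
    rw [schwarzian_eq_deriv_preSchwarzian (hfa.deriv.deriv z hz).differentiableAt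
      (hfa.deriv z hz).differentiableAt (hf' z hz)]
    exact deriv_sub_sq_div_two_of_eventuallyEq (hud.differentiableAt (isOpen_ball.mem_nhds hz))
      (one_sub_mul_ne_zero_of_norm_lt_one hz1 huz)
      (eventually_of_mem (isOpen_ball.mem_nhds hz) hPu)
  have hc : ‖(2 - 2 * α : ℂ)‖ = 2 * (1 - α) := by
    rw [show (2 - 2 * α : ℂ) = (2 * (1 - α) : ℝ) by push_cast; ring, norm_real,
      Real.norm_of_nonneg (by linarith)]
  have hbound := one_sub_sq_sq_mul_norm_div_le hα0.le hz1 huz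
    (norm_deriv_mul_le_of_mapsTo_closedBall hud hu hz)
  change _ * ‖schwarzian f z‖ ≤ _
  rw [hS, mul_div_assoc, norm_mul, hc]
  nlinarith

theorem schwarzian_bound_improves_suita_large_alpha
    (f : ℂ → ℂ) (α : ℝ) (hα0 : 1 / 2 < α) (hα1 : α < 1)
    (hf : DifferentiableOn ℂ f (Metric.ball 0 1))
    (hf' : ∀ z ∈ Metric.ball (0:ℂ) 1, deriv f z ≠ 0)
    (hf0 : f 0 = 0) (hf1 : deriv f 0 = 1)
    (hconv : ∀ z ∈ Metric.ball (0:ℂ) 1,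
      α < (1 + z * (deriv (deriv f) z / deriv f z)).re)
    (p : ℝ) (hp : p = ‖deriv (deriv f) 0‖ / (2 * (1 - α)))
    (hpb : p ≤ (3 * α - 1) / (5 * α - 1)) :
    2 * (1 - α) * (1 + α * ((1 + p) / (1 - p))) ≤ 8 * α * (1 - α) ∧
    ∀ z ∈ Metric.ball (0:ℂ) 1,
      (1 - ‖z‖ ^ 2) ^ 2 *
        ‖deriv (deriv (deriv f)) z / deriv f z
          - 3 / 2 * (deriv (deriv f) z / deriv f z) ^ 2‖ ≤ 8 * α * (1 - α) :=
  schwarzian_bound_improves_suita_large_alpha_general f α hα0 hα1 hf hf' hconv p hpb
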